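/- Let μ be the restriction of one-dimensional Lebesgue measure to [0,1], let ρ ∈ P₂(ℝ), and let X ∈ L²(ℝ,μ) be monotone with X#μ = ρ. Define f_ρ(x) := −(1/2)( ρ((−∞,x)) + ρ((−∞,x]) − 1 ) for x ∈ ℝ. Then for every bounded continuous function φ : ℝ → ℝ, ∫_ℝ φ(x) f_ρ(x) ρ(dx) = ∫_0^1 φ(X(m)) · ( −(1/2)(2m − 1) ) dm. -/

import Mathlib

open MeasureTheory Filter Topology Set
open scoped RealInnerProductSpace

/-- The support of a Borel measure: the set of points all of whose open
neighborhoods have positive measure. -/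
def msupport {α : Type*} [TopologicalSpace α] [MeasurableSpace α] (ν : Measure α) : Set α :=
  {z : α | ∀ U : Set α, IsOpen U → z ∈ U → 0 < ν U}

/-- A monotone subset of `ℝ × ℝ`. -/
def MonotoneSet (Γ : Set (ℝ × ℝ)) : Prop :=
  ∀ p ∈ Γ, ∀ q ∈ Γ, 0 ≤ (p.1 - q.1) * (p.2 - q.2)

/-- The transport plan `γ_X = (id, X) # μ` induced by `X ∈ L²(ℝ, μ)`. -/
noncomputable def plan (μ : Measure ℝ) (X : MeasureTheory.Lp ℝ 2 μ) : Measure (ℝ × ℝ) :=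
  Measure.map (fun m => (m, X m)) μ

/-- The cone of monotone maps in `L²(ℝ, μ)`. -/
def monoCone (μ : Measure ℝ) : Set (MeasureTheory.Lp ℝ 2 μ) :=
  {X | MonotoneSet (msupport (plan μ X))}

/- ### Auxiliary lemmas -/

/-- The complement of `msupport ν` is open. -/
lemma isOpen_compl_msupport {α : Type*} [TopologicalSpace α] [MeasurableSpace α]
    (ν : Measure α) : IsOpen (msupport ν)ᶜ := by
  rw [isOpen_iff_forall_mem_open]
  intro z hz
  simp only [msupport, Set.mem_compl_iff, Set.mem_setOf_eq] at hz
  push_neg at hz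
  obtain ⟨U, hUo, hzU, hU⟩ := hz
  have hU0 : ν U = 0 := le_antisymm hU bot_le
  refine ⟨U, fun z' hz' => ?_, hUo, hzU⟩
  intro hsup
  have := hsup U hUo hz'
  simp [hU0] at this

/-- In a second-countable space, the complement of the support is null. -/
lemma msupport_compl_null {α : Type*} [TopologicalSpace α] [MeasurableSpace α]
    [SecondCountableTopology α] (ν : Measure α) :
    ν (msupport ν)ᶜ = 0 := by
  obtain ⟨b, hbc, -, hb⟩ := TopologicalSpace.exists_countable_basis α
  have hsub : (msupport ν)ᶜ ⊆ ⋃ U ∈ {U ∈ b | ν U = 0}, U := by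
    intro z hz
    simp only [msupport, Set.mem_compl_iff, Set.mem_setOf_eq] at hz
    push_neg at hz
    obtain ⟨U, hUo, hzU, hU⟩ := hz
    have hU0 : ν U = 0 := le_antisymm hU bot_le
    obtain ⟨V, hVb, hzV, hVU⟩ := hb.exists_subset_of_mem_open hzU hUo
    have hV0 : ν V = 0 := le_antisymm ((measure_mono hVU).trans hU0.le) bot_le
    exact Set.mem_biUnion ⟨hVb, hV0⟩ hzV
  refine measure_mono_null hsub ?_
  rw [measure_biUnion_null_iff (hbc.mono (Set.sep_subset _ _))]
  exact fun U hU => hU.2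

/-- A signed indicator kernel: `sgn2 x y = 1` if `y < x`, `-1` if `x < y`, `0` otherwise. -/
noncomputable def sgn2 (x y : ℝ) : ℝ :=
  (Set.Iio x).indicator (fun _ => (1 : ℝ)) y - (Set.Ioi x).indicator (fun _ => (1 : ℝ)) y

lemma sgn2_of_lt {x y : ℝ} (h : x < y) : sgn2 x y = -1 := by
  simp [sgn2, Set.indicator_apply, h, not_lt.2 h.le]

lemma sgn2_of_gt {x y : ℝ} (h : y < x) : sgn2 x y = 1 := by
  simp [sgn2, Set.indicator_apply, h, not_lt.2 h.le]

lemma sgn2_antisymm (x y : ℝ) : sgn2 y x = - sgn2 x y := by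
  rcases lt_trichotomy x y with h | h | h
  · rw [sgn2_of_gt h, sgn2_of_lt h]; norm_num
  · subst h; simp [sgn2, Set.indicator_apply]
  · rw [sgn2_of_lt h, sgn2_of_gt h]

lemma abs_sgn2_le (x y : ℝ) : |sgn2 x y| ≤ 1 := by
  rcases lt_trichotomy x y with h | h | h
  · rw [sgn2_of_lt h]; norm_num
  · subst h; simp [sgn2, Set.indicator_apply]
  · rw [sgn2_of_gt h]; norm_num

lemma measurable_sgn2_right (x : ℝ) : Measurable (fun y => sgn2 x y) := by
  exact (measurable_const.indicator measurableSet_Iio).sub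
    (measurable_const.indicator measurableSet_Ioi)

lemma measurable_sgn2 : Measurable (fun p : ℝ × ℝ => sgn2 p.1 p.2) := by
  have h1 : (fun p : ℝ × ℝ => (Set.Iio p.1).indicator (fun _ => (1 : ℝ)) p.2)
      = Set.indicator {p : ℝ × ℝ | p.2 < p.1} (fun _ => (1 : ℝ)) := by
    ext p; simp [Set.indicator_apply, Set.mem_Iio]
  have h2 : (fun p : ℝ × ℝ => (Set.Ioi p.1).indicator (fun _ => (1 : ℝ)) p.2)
      = Set.indicator {p : ℝ × ℝ | p.1 < p.2} (fun _ => (1 : ℝ)) := by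
    ext p; simp [Set.indicator_apply, Set.mem_Ioi]
  have m1 : Measurable (fun p : ℝ × ℝ => (Set.Iio p.1).indicator (fun _ => (1 : ℝ)) p.2) := by
    rw [h1]
    exact measurable_const.indicator (measurableSet_lt measurable_snd measurable_fst)
  have m2 : Measurable (fun p : ℝ × ℝ => (Set.Ioi p.1).indicator (fun _ => (1 : ℝ)) p.2) := by
    rw [h2]
    exact measurable_const.indicator (measurableSet_lt measurable_fst measurable_snd)
  exact m1.sub m2

lemma integral_sgn2 (ν : Measure ℝ) [IsFiniteMeasure ν] (x : ℝ) :
    ∫ y, sgn2 x y ∂ν = (ν (Set.Iio x)).toReal - (ν (Set.Ioi x)).toReal := by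
  unfold sgn2
  rw [integral_sub ((integrable_const (1 : ℝ)).indicator measurableSet_Iio)
      ((integrable_const (1 : ℝ)).indicator measurableSet_Ioi),
    integral_indicator_const _ measurableSet_Iio, integral_indicator_const _ measurableSet_Ioi]
  simp
  rfl

/-- Bounded a.e.-measurable functions on finite measures are integrable. -/
lemma integrable_of_bdd {α : Type*} [MeasurableSpace α] {ν : Measure α} [IsFiniteMeasure ν]
    {f : α → ℝ} (hf : AEStronglyMeasurable f ν) {C : ℝ} (h : ∀ᵐ a ∂ν, |f a| ≤ C) :
    Integrable f ν :=
  ⟨hf, HasFiniteIntegral.of_bounded (h.mono fun a ha => by simpa [Real.norm_eq_abs] using ha)⟩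

/-- Lagrangian representation of the Euler–Poisson force: for `μ = Leb|_{[0,1]}`,
`ρ = X#μ` with `X` monotone, and `f_ρ(x) = −½(ρ((−∞,x)) + ρ((−∞,x]) − 1)`, one has
`∫ φ f_ρ dρ = ∫_0^1 φ(X(m)) (−½(2m − 1)) dm` for every bounded continuous `φ`. -/
theorem stmt_18 (ρ : Measure ℝ) [IsProbabilityMeasure ρ]
    (hρ2 : Integrable (fun x => x ^ 2) ρ)
    (X : MeasureTheory.Lp ℝ 2 (volume.restrict (Set.Icc (0 : ℝ) 1)))
    (hX : X ∈ monoCone (volume.restrict (Set.Icc (0 : ℝ) 1)))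
    (hpush : Measure.map X (volume.restrict (Set.Icc (0 : ℝ) 1)) = ρ) :
    ∀ φ : ℝ → ℝ, Continuous φ → (∃ M : ℝ, ∀ x : ℝ, |φ x| ≤ M) →
      ∫ x, φ x * (-(1 / 2) * ((ρ (Set.Iio x)).toReal + (ρ (Set.Iic x)).toReal - 1)) ∂ρ =
        ∫ m in Set.Icc (0 : ℝ) 1, φ (X m) * (-(1 / 2) * (2 * m - 1)) := by
  intro φ hφ hbd
  obtain ⟨M, hM⟩ := hbd
  have hM0 : 0 ≤ M := le_trans (abs_nonneg _) (hM 0)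
  haveI hμprob : IsProbabilityMeasure (volume.restrict (Set.Icc (0 : ℝ) 1)) :=
    ⟨by rw [Measure.restrict_apply_univ, Real.volume_Icc]; norm_num⟩
  -- measurable representative of X
  have hXsm := (MeasureTheory.Lp.aestronglyMeasurable X)
  set Y : ℝ → ℝ := hXsm.mk X with hYdef
  have hYm : Measurable Y := hXsm.stronglyMeasurable_mk.measurable
  have hXY : (X : ℝ → ℝ) =ᵐ[volume.restrict (Set.Icc (0 : ℝ) 1)] Y := hXsm.ae_eq_mk
  have hmapY : Measure.map Y (volume.restrict (Set.Icc (0 : ℝ) 1)) = ρ :=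
    (Measure.map_congr hXY).symm.trans hpush
  -- the abbreviation for f_ρ without the -1/2 factor
  set A : ℝ → ℝ := fun x => (ρ (Set.Iio x)).toReal + (ρ (Set.Iic x)).toReal - 1 with hAdef
  have hAmeas : Measurable A := by
    have h1 : Measurable fun x => (ρ (Set.Iio x)).toReal := by
      refine Monotone.measurable fun a b hab => ?_
      exact ENNReal.toReal_mono (measure_ne_top _ _) (measure_mono (Set.Iio_subset_Iio hab))
    have h2 : Measurable fun x => (ρ (Set.Iic x)).toReal := by
      refine Monotone.measurable fun a b hab => ?_
      exact ENNReal.toReal_mono (measure_ne_top _ _) (measure_mono (Set.Iic_subset_Iic.2 hab))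
    exact (h1.add h2).sub measurable_const
  have htR : ∀ s : Set ℝ, (ρ s).toReal ≤ 1 := by
    intro s
    have := prob_le_one (μ := ρ) (s := s)
    simpa using ENNReal.toReal_mono ENNReal.one_ne_top this
  have hAbd : ∀ x, |A x| ≤ 1 := by
    intro x
    have h1 := htR (Set.Iio x)
    have h2 := htR (Set.Iic x)
    have h3 : 0 ≤ (ρ (Set.Iio x)).toReal := ENNReal.toReal_nonneg
    have h4 : 0 ≤ (ρ (Set.Iic x)).toReal := ENNReal.toReal_nonneg
    simp only [hAdef]
    rw [abs_le]
    constructor <;> linarith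
  -- ∫ sgn2 x y dρ(y) = A x
  have hAint : ∀ x, ∫ y, sgn2 x y ∂ρ = A x := by
    intro x
    rw [integral_sgn2]
    have hcompl : (ρ (Set.Iic x)).toReal + (ρ (Set.Ioi x)).toReal = 1 := by
      have h := measure_add_measure_compl (μ := ρ) (measurableSet_Iic (a := x))
      rw [Set.compl_Iic] at h
      have h' := congrArg ENNReal.toReal h
      rwa [ENNReal.toReal_add (measure_ne_top _ _) (measure_ne_top _ _), measure_univ,
        ENNReal.toReal_one] at h'
    simp only [hAdef]
    linarith
  -- ∫ sgn2 m m' dμ(m') = 2m - 1 for m ∈ [0,1]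
  have hBint : ∀ m ∈ Set.Icc (0 : ℝ) 1,
      ∫ m', sgn2 m m' ∂(volume.restrict (Set.Icc (0 : ℝ) 1)) = 2 * m - 1 := by
    intro m hm
    rw [integral_sgn2]
    have e1 : Set.Iio m ∩ Set.Icc (0 : ℝ) 1 = Set.Ico 0 m := by
      ext t
      simp only [Set.mem_inter_iff, Set.mem_Iio, Set.mem_Icc, Set.mem_Ico]
      constructor
      · rintro ⟨h1, h2, h3⟩; exact ⟨h2, h1⟩
      · rintro ⟨h1, h2⟩; exact ⟨h2, h1, le_trans h2.le hm.2⟩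
    have e2 : Set.Ioi m ∩ Set.Icc (0 : ℝ) 1 = Set.Ioc m 1 := by
      ext t
      simp only [Set.mem_inter_iff, Set.mem_Ioi, Set.mem_Icc, Set.mem_Ioc]
      constructor
      · rintro ⟨h1, h2, h3⟩; exact ⟨h1, h3⟩
      · rintro ⟨h1, h2⟩; exact ⟨h1, le_trans hm.1 h1.le, h2⟩
    rw [Measure.restrict_apply measurableSet_Iio, Measure.restrict_apply measurableSet_Ioi,
      e1, e2, Real.volume_Ico, Real.volume_Ioc, ENNReal.toReal_ofReal (by linarith [hm.1]),
      ENNReal.toReal_ofReal (by linarith [hm.2])]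
    ring
  -- a.e. membership in the support of the plan
  have hXmono : MonotoneSet (msupport (plan (volume.restrict (Set.Icc (0 : ℝ) 1)) X)) := hX
  set S : Set (ℝ × ℝ) := msupport (plan (volume.restrict (Set.Icc (0 : ℝ) 1)) X) with hSdef
  have hSco : IsOpen Sᶜ := isOpen_compl_msupport _
  have haeS : ∀ᵐ m ∂(volume.restrict (Set.Icc (0 : ℝ) 1)), (m, Y m) ∈ S := by
    have hf : AEMeasurable (fun m => (m, (X : ℝ → ℝ) m)) (volume.restrict (Set.Icc (0 : ℝ) 1)) :=
      aemeasurable_id.prodMk hXsm.aemeasurable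
    have h0 : (volume.restrict (Set.Icc (0 : ℝ) 1))
        ((fun m => (m, (X : ℝ → ℝ) m)) ⁻¹' Sᶜ) = 0 := by
      rw [← Measure.map_apply_of_aemeasurable hf hSco.measurableSet]
      exact msupport_compl_null _
    have hae1 : ∀ᵐ m ∂(volume.restrict (Set.Icc (0 : ℝ) 1)), (m, (X : ℝ → ℝ) m) ∈ S := by
      rw [ae_iff]
      exact h0
    filter_upwards [hae1, hXY] with m h1 h2
    rw [← h2]; exact h1
  -- diagonal is null
  have hdiag : ∀ᵐ p ∂((volume.restrict (Set.Icc (0 : ℝ) 1)).prod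
      (volume.restrict (Set.Icc (0 : ℝ) 1))), p.1 ≠ p.2 := by
    rw [ae_iff]
    have hms : MeasurableSet {p : ℝ × ℝ | p.1 = p.2} :=
      measurableSet_eq_fun measurable_fst measurable_snd
    have hset : {p : ℝ × ℝ | ¬p.1 ≠ p.2} = {p : ℝ × ℝ | p.1 = p.2} := by
      ext p; simp
    rw [hset, Measure.prod_apply hms]
    have hz : ∀ x : ℝ, (volume.restrict (Set.Icc (0 : ℝ) 1))
        (Prod.mk x ⁻¹' {p : ℝ × ℝ | p.1 = p.2}) = 0 := by
      intro x
      have hpre : (Prod.mk x ⁻¹' {p : ℝ × ℝ | p.1 = p.2}) = {x} := by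
        ext t; simp [eq_comm]
      rw [hpre, Measure.restrict_apply (MeasurableSet.singleton x)]
      exact measure_mono_null Set.inter_subset_left Real.volume_singleton
    simp only [hz, lintegral_zero]
  -- the key pointwise vanishing
  have hpt : ∀ m m' : ℝ, m ≠ m' → (m, Y m) ∈ S → (m', Y m') ∈ S →
      (φ (Y m) - φ (Y m')) * (sgn2 (Y m) (Y m') - sgn2 m m') = 0 := by
    intro m m' hne h1 h2
    by_cases hYe : Y m = Y m'
    · rw [hYe]; ring
    have hmono := hXmono (m, Y m) h1 (m', Y m') h2
    simp only at hmono
    rcases hne.lt_or_gt with h | h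
    · have hle : Y m ≤ Y m' := by nlinarith
      have hlt : Y m < Y m' := lt_of_le_of_ne hle hYe
      rw [sgn2_of_lt hlt, sgn2_of_lt h]; ring
    · have hle : Y m' ≤ Y m := by nlinarith
      have hlt : Y m' < Y m := lt_of_le_of_ne hle fun e => hYe e.symm
      rw [sgn2_of_gt hlt, sgn2_of_gt h]; ring
  -- the kernel K and its properties
  set K : ℝ × ℝ → ℝ := fun p => φ (Y p.1) * (sgn2 (Y p.1) (Y p.2) - sgn2 p.1 p.2) with hKdef
  set μ2 : Measure (ℝ × ℝ) := (volume.restrict (Set.Icc (0 : ℝ) 1)).prod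
    (volume.restrict (Set.Icc (0 : ℝ) 1)) with hμ2def
  have hKm : Measurable K := by
    have hm1 : Measurable fun p : ℝ × ℝ => sgn2 (Y p.1) (Y p.2) :=
      measurable_sgn2.comp ((hYm.comp measurable_fst).prodMk (hYm.comp measurable_snd))
    exact (hφ.measurable.comp (hYm.comp measurable_fst)).mul (hm1.sub measurable_sgn2)
  have hKbd : ∀ p, |K p| ≤ M * 2 := by
    intro p
    rw [hKdef]
    rw [abs_mul]
    refine mul_le_mul (hM _) ?_ (abs_nonneg _) hM0
    calc |sgn2 (Y p.1) (Y p.2) - sgn2 p.1 p.2|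
        ≤ |sgn2 (Y p.1) (Y p.2)| + |sgn2 p.1 p.2| := abs_sub _ _
      _ ≤ 1 + 1 := add_le_add (abs_sgn2_le _ _) (abs_sgn2_le _ _)
      _ = 2 := by norm_num
  have hKint : Integrable K μ2 :=
    integrable_of_bdd hKm.aestronglyMeasurable (ae_of_all _ hKbd)
  have hKswap_m : Measurable fun p : ℝ × ℝ => K (p.2, p.1) := hKm.comp measurable_swap
  have hKswap_int : Integrable (fun p : ℝ × ℝ => K (p.2, p.1)) μ2 :=
    integrable_of_bdd hKswap_m.aestronglyMeasurable (ae_of_all _ fun p => hKbd _)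
  -- I = 0 by symmetrization
  have hI0 : ∫ p, K p ∂μ2 = 0 := by
    have hswap : ∫ p, K p ∂μ2 = ∫ p, K (p.2, p.1) ∂μ2 := by
      conv_lhs => rw [hμ2def, ← Measure.prod_swap]
      rw [integral_map measurable_swap.aemeasurable hKm.aestronglyMeasurable]
      rfl
    have hsum : ∫ p, (K p + K (p.2, p.1)) ∂μ2 = 0 := by
      refine integral_eq_zero_of_ae ?_
      have haefst : ∀ᵐ p ∂μ2, (p.1, Y p.1) ∈ S :=
        Measure.quasiMeasurePreserving_fst.ae haeS
      have haesnd : ∀ᵐ p ∂μ2, (p.2, Y p.2) ∈ S :=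
        Measure.quasiMeasurePreserving_snd.ae haeS
      filter_upwards [hdiag, haefst, haesnd] with p hne h1 h2
      have key := hpt p.1 p.2 hne h1 h2
      have e1 := sgn2_antisymm (Y p.1) (Y p.2)
      have e2 := sgn2_antisymm p.1 p.2
      simp only [hKdef, Pi.zero_apply]
      rw [e1, e2]
      linear_combination key
    have h2 : (∫ p, K p ∂μ2) + (∫ p, K p ∂μ2) = 0 := by
      nth_rewrite 2 [hswap]
      rw [← integral_add hKint hKswap_int]
      exact hsum
    linarith
  -- iterated integral computation
  have hinner_meas : ∀ m : ℝ, Measurable fun m' => sgn2 (Y m) (Y m') :=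
    fun m => (measurable_sgn2_right (Y m)).comp hYm
  have hiter : ∫ p, K p ∂μ2
      = ∫ m, φ (Y m) * ((∫ y, sgn2 (Y m) y ∂ρ) -
          (∫ m', sgn2 m m' ∂(volume.restrict (Set.Icc (0 : ℝ) 1))))
        ∂(volume.restrict (Set.Icc (0 : ℝ) 1)) := by
    rw [hμ2def, integral_prod _ hKint]
    refine integral_congr_ae (ae_of_all _ fun m => ?_)
    have h1 : Integrable (fun m' => sgn2 (Y m) (Y m')) (volume.restrict (Set.Icc (0 : ℝ) 1)) :=
      integrable_of_bdd (hinner_meas m).aestronglyMeasurable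
        (ae_of_all _ fun m' => abs_sgn2_le _ _)
    have h2 : Integrable (fun m' => sgn2 m m') (volume.restrict (Set.Icc (0 : ℝ) 1)) :=
      integrable_of_bdd (measurable_sgn2_right m).aestronglyMeasurable
        (ae_of_all _ fun m' => abs_sgn2_le _ _)
    calc ∫ m', K (m, m') ∂(volume.restrict (Set.Icc (0 : ℝ) 1))
        = ∫ m', φ (Y m) * (sgn2 (Y m) (Y m') - sgn2 m m')
            ∂(volume.restrict (Set.Icc (0 : ℝ) 1)) := rfl
      _ = φ (Y m) * ∫ m', (sgn2 (Y m) (Y m') - sgn2 m m')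
            ∂(volume.restrict (Set.Icc (0 : ℝ) 1)) := by rw [integral_const_mul]
      _ = φ (Y m) * ((∫ m', sgn2 (Y m) (Y m') ∂(volume.restrict (Set.Icc (0 : ℝ) 1))) -
            (∫ m', sgn2 m m' ∂(volume.restrict (Set.Icc (0 : ℝ) 1)))) := by
          rw [integral_sub h1 h2]
      _ = φ (Y m) * ((∫ y, sgn2 (Y m) y ∂ρ) -
            (∫ m', sgn2 m m' ∂(volume.restrict (Set.Icc (0 : ℝ) 1)))) := by
          rw [← hmapY, integral_map hYm.aemeasurable
            (measurable_sgn2_right (Y m)).aestronglyMeasurable]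
  -- hence the key identity
  have hmem : ∀ᵐ m ∂(volume.restrict (Set.Icc (0 : ℝ) 1)), m ∈ Set.Icc (0 : ℝ) 1 :=
    ae_restrict_mem measurableSet_Icc
  have key : ∫ m, φ (Y m) * (A (Y m) - (2 * m - 1))
      ∂(volume.restrict (Set.Icc (0 : ℝ) 1)) = 0 := by
    have h1 : ∫ m, φ (Y m) * (A (Y m) - (2 * m - 1)) ∂(volume.restrict (Set.Icc (0 : ℝ) 1))
        = ∫ m, φ (Y m) * ((∫ y, sgn2 (Y m) y ∂ρ) -
            (∫ m', sgn2 m m' ∂(volume.restrict (Set.Icc (0 : ℝ) 1))))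
          ∂(volume.restrict (Set.Icc (0 : ℝ) 1)) := by
      refine integral_congr_ae ?_
      filter_upwards [hmem] with m hm
      rw [hAint (Y m), hBint m hm]
    rw [h1, ← hiter]
    exact hI0
  -- integrability of the two final integrands
  have hYφmeas : Measurable fun m => φ (Y m) := hφ.measurable.comp hYm
  have habs12 : |(-(1 / 2) : ℝ)| ≤ 1 := by
    rw [abs_neg, abs_of_nonneg (by norm_num : (0 : ℝ) ≤ 1 / 2)]; norm_num
  have hint1 : Integrable (fun m => φ (Y m) * (-(1 / 2) * A (Y m)))
      (volume.restrict (Set.Icc (0 : ℝ) 1)) := by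
    refine integrable_of_bdd (C := M) ((hYφmeas.mul
      (measurable_const.mul (hAmeas.comp hYm))).aestronglyMeasurable) (ae_of_all _ fun m => ?_)
    rw [abs_mul, abs_mul]
    calc |φ (Y m)| * (|(-(1 / 2) : ℝ)| * |A (Y m)|)
        ≤ M * (1 * 1) := by
          refine mul_le_mul (hM _) ?_ (by positivity) hM0
          exact mul_le_mul habs12 (hAbd _) (abs_nonneg _) (by norm_num)
      _ = M := by ring
  have hint2 : Integrable (fun m => φ (Y m) * (-(1 / 2) * (2 * m - 1)))
      (volume.restrict (Set.Icc (0 : ℝ) 1)) := by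
    refine integrable_of_bdd (C := M) ((hYφmeas.mul
      (measurable_const.mul ((measurable_const.mul measurable_id).sub
        measurable_const))).aestronglyMeasurable) ?_
    filter_upwards [hmem] with m hm
    rw [abs_mul, abs_mul]
    calc |φ (Y m)| * (|(-(1 / 2) : ℝ)| * |2 * m - 1|)
        ≤ M * (1 * 1) := by
          refine mul_le_mul (hM _) ?_ (by positivity) hM0
          refine mul_le_mul habs12 ?_ (abs_nonneg _) (by norm_num)
          rw [abs_le]
          constructor
          · linarith [hm.1]
          · linarith [hm.2]
      _ = M := by ring
  -- rewrite the two sides of the goal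
  have hLHS : ∫ x, φ x * (-(1 / 2) * ((ρ (Set.Iio x)).toReal + (ρ (Set.Iic x)).toReal - 1)) ∂ρ
      = ∫ m, φ (Y m) * (-(1 / 2) * A (Y m)) ∂(volume.restrict (Set.Icc (0 : ℝ) 1)) := by
    have step1 : ∫ x, φ x * (-(1 / 2) * ((ρ (Set.Iio x)).toReal + (ρ (Set.Iic x)).toReal - 1)) ∂ρ
        = ∫ x, φ x * (-(1 / 2) * A x) ∂ρ := by simp only [hAdef]
    rw [step1]
    conv_lhs => rw [← hmapY]
    rw [integral_map hYm.aemeasurable]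
    exact (hφ.measurable.mul (measurable_const.mul hAmeas)).aestronglyMeasurable
  have hRHS : ∫ m in Set.Icc (0 : ℝ) 1, φ ((X : ℝ → ℝ) m) * (-(1 / 2) * (2 * m - 1))
      = ∫ m, φ (Y m) * (-(1 / 2) * (2 * m - 1)) ∂(volume.restrict (Set.Icc (0 : ℝ) 1)) := by
    refine integral_congr_ae ?_
    filter_upwards [hXY] with m hm
    rw [hm]
  rw [hLHS, hRHS, ← sub_eq_zero, ← integral_sub hint1 hint2]
  have hre : (fun m => φ (Y m) * (-(1 / 2) * A (Y m)) - φ (Y m) * (-(1 / 2) * (2 * m - 1)))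
      = fun m => (-(1 / 2)) * (φ (Y m) * (A (Y m) - (2 * m - 1))) := by
    funext m; ring
  rw [hre, integral_const_mul, key, mul_zero]
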